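/- For every n ≥ 2 there exist constants c, C > 0, depending only on n, such that for every integer k ≥ 1 the L²(σ)-normalized highest weight spherical harmonic Q̃_k = Q_k / ‖Q_k‖_{L²(σ)} satisfies: (i) |Q̃_k(x)| ≤ C k^{(n−1)/4} e^{−k t(x)/2} for every x ∈ Sⁿ, where t(x) = x₃² + ⋯ + x_{n+1}²; and (ii) |Q̃_k(x)| ≥ c k^{(n−1)/4} e^{−k t(x)} for every x ∈ Sⁿ with t(x) ≤ 1/2. -/

import Mathlib

open MeasureTheory Real

noncomputable section

/-- `ℝ^{n+1}` as a Euclidean space. -/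
abbrev Esp (n : ℕ) := EuclideanSpace ℝ (Fin (n + 1))

/-- The unit sphere `Sⁿ ⊂ ℝ^{n+1}`. -/
abbrev Sph (n : ℕ) := Metric.sphere (0 : Esp n) 1

/-- The surface measure `σ` on the unit sphere `Sⁿ`. -/
def sphMeasure (n : ℕ) : Measure (Sph n) := (volume : Measure (Esp n)).toSphere

/-- The geodesic distance `d(x,y) = arccos ⟨x,y⟩` on the sphere. -/
def gdist {n : ℕ} (x y : Sph n) : ℝ := Real.arccos (inner ℝ (x : Esp n) (y : Esp n))

/-- The geodesic ball `B_r(x) ⊂ Sⁿ`. -/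
def gball {n : ℕ} (x : Sph n) (r : ℝ) : Set (Sph n) := {y | gdist x y < r}

/-- `u : Sⁿ → ℂ` is a spherical harmonic of degree `k`: the restriction to `Sⁿ` of a
polynomial on `ℝ^{n+1}` that is homogeneous of degree `k` and harmonic. -/
def IsSphericalHarmonic {n : ℕ} (k : ℕ) (u : Sph n → ℂ) : Prop :=
  ∃ P : MvPolynomial (Fin (n + 1)) ℂ, P.IsHomogeneous k ∧
    (∑ i, MvPolynomial.pderiv i (MvPolynomial.pderiv i P)) = 0 ∧
    ∀ x : Sph n, u x = MvPolynomial.eval (fun i => ((x : Esp n) i : ℂ)) P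

/-- The `L²(σ)` norm of `u` over the geodesic ball `B_r(x)`. -/
def L2g {n : ℕ} (u : Sph n → ℂ) (x : Sph n) (r : ℝ) : ℝ :=
  Real.sqrt (∫ y in gball x r, ‖u y‖ ^ 2 ∂ sphMeasure n)

/-- The `L^p(σ)` norm of `u` on `Sⁿ`. -/
def LpS {n : ℕ} (u : Sph n → ℂ) (p : ℝ) : ℝ :=
  (∫ x, ‖u x‖ ^ p ∂ sphMeasure n) ^ (1 / p)

/-- The critical exponent `p_c = 2(n+1)/(n-1)`. -/
def pc (n : ℕ) : ℝ := 2 * ((n : ℝ) + 1) / ((n : ℝ) - 1)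

/-- The highest weight spherical harmonic `Q_k(x) = (x₁ + i x₂)^k` on `Sⁿ`. -/
def Qfun (n k : ℕ) (x : Sph n) : ℂ :=
  ((((x : Esp n) 0 : ℝ) : ℂ) + Complex.I * (((x : Esp n) 1 : ℝ) : ℂ)) ^ k

/-- The `L²(σ)` norm of `Q_k`. -/
def Qnorm (n k : ℕ) : ℝ :=
  Real.sqrt (∫ x : Sph n, ‖Qfun n k x‖ ^ 2 ∂ sphMeasure n)

/-- The `L²(σ)`-normalized highest weight spherical harmonic `Q̃_k = Q_k / ‖Q_k‖_{L²(σ)}`. -/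
def Qtilde (n k : ℕ) (x : Sph n) : ℂ := Qfun n k x / (Qnorm n k : ℂ)

/-- `t(x) = x₃² + ⋯ + x_{n+1}²`, the squared distance from the equatorial plane. -/
def tfun (n : ℕ) (x : Sph n) : ℝ :=
  ∑ i ∈ Finset.univ.filter (fun i : Fin (n + 1) => i ≠ 0 ∧ i ≠ 1), ((x : Esp n) i) ^ 2

open Set Filter Topology

/-! On the sphere `|Q_k|² = (1 - t)^k`, and `e^{-2t} ≤ 1 - t ≤ e^{-t}` (the first for `t ≤ 1/2`)
gives the Gaussian profile. For the normalisation, integrate `(x₁² + x₂²)^k e^{-|x|²}` over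
`ℝ^{n+1}` in two ways: in polar coordinates it is `‖Q_k‖² Γ(k + (n+1)/2) / 2`, and by Fubini it
is `π^{(n-1)/2}` times the same integral over `ℝ²`, which is `σ(S¹) k! / 2`. Hence
`‖Q_k‖² k^{(n-1)/2}` is a constant multiple of Euler's sequence for `Γ((n-1)/2)`, so it is
bounded above and below by positive constants for `k ≥ 1`. -/

theorem integral_eq_toSphere_mul_radial {E : Type*} [NormedAddCommGroup E] [NormedSpace ℝ E]
    [MeasurableSpace E] [BorelSpace E] [FiniteDimensional ℝ E] [Nontrivial E] (μ : Measure E)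
    [μ.IsAddHaarMeasure] (φ : E → ℝ) (f : Metric.sphere (0 : E) 1 → ℝ) (g : ℝ → ℝ)
    (hφ : ∀ (y : Metric.sphere (0 : E) 1) (r : ℝ), 0 < r → φ (r • (y : E)) = f y * g r) :
    ∫ x, φ x ∂μ = (∫ y, f y ∂μ.toSphere) *
      ∫ r in Ioi (0 : ℝ), r ^ (Module.finrank ℝ E - 1) * g r := by
  calc ∫ x, φ x ∂μ = ∫ x : ({0}ᶜ : Set E), φ x ∂μ.comap (↑) := by
        rw [integral_subtype_comap (measurableSet_singleton _).compl, restrict_compl_singleton]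
    _ = ∫ z : Metric.sphere (0 : E) 1 × Ioi (0 : ℝ), f z.1 * g z.2
          ∂μ.toSphere.prod (Measure.volumeIoiPow (Module.finrank ℝ E - 1)) := by
        rw [← μ.measurePreserving_homeomorphUnitSphereProd.integral_comp
          (Homeomorph.measurableEmbedding _)]
        refine integral_congr_ae (Eventually.of_forall fun x => ?_)
        have hx : 0 < ‖(x : E)‖ := norm_pos_iff.2 x.2
        simpa [smul_inv_smul₀ hx.ne'] using hφ ((homeomorphUnitSphereProd E) x).1 ‖(x : E)‖ hx
    _ = (∫ y, f y ∂μ.toSphere) *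
          ∫ r : Ioi (0 : ℝ), g r ∂Measure.volumeIoiPow (Module.finrank ℝ E - 1) :=
        integral_prod_mul f (fun r : Ioi (0 : ℝ) => g r)
    _ = _ := by
        congr 1
        rw [Measure.volumeIoiPow, integral_withDensity_eq_integral_toReal_smul
            (measurable_subtype_coe.pow_const _).ennreal_ofReal
            (.of_forall fun _ => ENNReal.ofReal_lt_top),
          integral_subtype_comap measurableSet_Ioi
            (fun r => (ENNReal.ofReal (r ^ _)).toReal • g r)]
        refine setIntegral_congr_fun measurableSet_Ioi fun r hr => ?_
        rw [ENNReal.toReal_ofReal (pow_nonneg (le_of_lt hr) _), smul_eq_mul]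

theorem integral_Ioi_pow_mul_exp_neg_sq (m : ℕ) :
    ∫ r in Ioi (0 : ℝ), r ^ m * exp (-r ^ 2) = Gamma ((m + 1) / 2) / 2 := by
  have h := integral_rpow_mul_exp_neg_rpow (p := 2) (q := m) two_pos
    (neg_one_lt_zero.trans_le m.cast_nonneg)
  rw [← one_div_mul_eq_div, ← h]
  refine setIntegral_congr_fun measurableSet_Ioi fun r _ => ?_
  norm_cast

theorem integral_comp_init_mul_exp_neg_sum_sq (m : ℕ) (f : (Fin (m + 1) → ℝ) → ℝ) :
    ∫ x : Fin (m + 2) → ℝ, f (Fin.init x) * exp (-∑ i, x i ^ 2) =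
      √π * ∫ y : Fin (m + 1) → ℝ, f y * exp (-∑ i, y i ^ 2) := by
  have hg : ∫ t : ℝ, exp (-t ^ 2) = √π := by simpa using integral_gaussian 1
  rw [← hg, ← integral_prod_mul, ← Measure.volume_eq_prod,
    ← (volume_preserving_piFinSuccAbove (fun _ => ℝ) (Fin.last (m + 1))).integral_comp']
  refine integral_congr_ae (.of_forall fun x => ?_)
  simp only [MeasurableEquiv.piFinSuccAbove_apply, Fin.insertNthEquiv_symm_apply,
    Fin.removeNth_last]
  rw [Fin.sum_univ_castSucc, neg_add, exp_add]
  simp only [Fin.init]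
  ring

theorem integral_two_coords_mul_exp_neg_sum_sq (m : ℕ) (g : ℝ → ℝ → ℝ) :
    ∫ x : Fin (m + 2) → ℝ, g (x 0) (x 1) * exp (-∑ i, x i ^ 2) =
      √π ^ m * ∫ x : Fin 2 → ℝ, g (x 0) (x 1) * exp (-∑ i, x i ^ 2) := by
  induction m with
  | zero => simp
  | succ m ih =>
    rw [pow_succ', mul_assoc, ← ih, ← integral_comp_init_mul_exp_neg_sum_sq]
    simp [Fin.init]

theorem integral_euclideanSpace_eq_pi {ι : Type*} [Fintype ι] (F : EuclideanSpace ℝ ι → ℝ) :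
    ∫ x, F x = ∫ x : ι → ℝ, F (WithLp.toLp 2 x) :=
  ((EuclideanSpace.volume_preserving_symm_measurableEquiv_toLp ι).symm.integral_comp' F).symm

theorem Gamma_add_nat_eq_mul_prod {s : ℝ} (hs : 0 < s) (n : ℕ) :
    Gamma (s + n) = Gamma s * ∏ j ∈ Finset.range n, (s + j) := by
  induction n with
  | zero => simp
  | succ n ih =>
    rw [Finset.prod_range_succ, Nat.cast_succ, ← add_assoc, Gamma_add_one (by positivity), ih]
    ring

theorem GammaSeq_eq_Gamma_div {s : ℝ} (hs : 0 < s) (k : ℕ) :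
    GammaSeq s k = k ^ s * Gamma (k + 1) * Gamma s / Gamma (k + 1 + s) := by
  have hΓ : Gamma (k + 1 + s) = Gamma s * ∏ j ∈ Finset.range (k + 1), (s + j) := by
    rw [← Gamma_add_nat_eq_mul_prod hs]; push_cast; ring_nf
  have := (Gamma_pos_of_pos hs).ne'
  rw [GammaSeq, hΓ, Gamma_nat_eq_factorial]
  field_simp

theorem exists_pos_bounds_of_tendsto {u : ℕ → ℝ} {L : ℝ} (hu : Tendsto u atTop (𝓝 L))
    (hL : 0 < L) (hpos : ∀ k, 0 < u k) : ∃ c C, 0 < c ∧ 0 < C ∧ ∀ k, c ≤ u k ∧ u k ≤ C := by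
  obtain ⟨C, hC⟩ := hu.bddAbove_range
  obtain ⟨B, hB⟩ := (hu.inv₀ hL.ne').bddAbove_range
  have hC' (k : ℕ) : u k ≤ C := hC ⟨k, rfl⟩
  have hB' (k : ℕ) : (u k)⁻¹ ≤ B := hB ⟨k, rfl⟩
  have hBpos : 0 < B := (inv_pos.2 (hpos 0)).trans_le (hB' 0)
  refine ⟨B⁻¹, C, inv_pos.2 hBpos, (hpos 0).trans_le (hC' 0), fun k => ⟨?_, hC' k⟩⟩
  exact inv_le_of_inv_le₀ (hpos k) (hB' k)

theorem exp_neg_two_mul_le_one_sub {t : ℝ} (h0 : 0 ≤ t) (h1 : t ≤ 1 / 2) :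
    exp (-(2 * t)) ≤ 1 - t :=
  calc exp (-(2 * t)) ≤ (1 + 2 * t)⁻¹ := by
        rw [exp_neg]; exact inv_anti₀ (by positivity) (by linarith [add_one_le_exp (2 * t)])
    _ ≤ 1 - t := by
        rw [inv_le_iff_one_le_mul₀ (by positivity)]; nlinarith

def sphMoment (n k : ℕ) : ℝ :=
  ∫ y : Sph n, ((y : Esp n) 0 ^ 2 + (y : Esp n) 1 ^ 2) ^ k ∂sphMeasure n

theorem sum_sq_eq_one {ι : Type*} [Fintype ι] (x : Metric.sphere (0 : EuclideanSpace ℝ ι) 1) :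
    ∑ i, (x : EuclideanSpace ℝ ι) i ^ 2 = 1 := by
  rw [← EuclideanSpace.real_norm_sq_eq, norm_eq_of_mem_sphere, one_pow]

theorem integral_mul_exp_neg_norm_sq_eq_sphMoment (n k : ℕ) :
    ∫ x : Esp n, (x 0 ^ 2 + x 1 ^ 2) ^ k * exp (-‖x‖ ^ 2) =
      sphMoment n k * (Gamma (k + (n + 1) / 2) / 2) := by
  rw [sphMoment, sphMeasure,
    integral_eq_toSphere_mul_radial volume _ _ (fun r => r ^ (2 * k) * exp (-r ^ 2))]
  · congr 1
    simp_rw [finrank_euclideanSpace_fin, Nat.add_sub_cancel, ← mul_assoc, ← pow_add,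
      integral_Ioi_pow_mul_exp_neg_sq]
    push_cast
    ring_nf
  · intro y r hr
    simp only [PiLp.smul_apply, smul_eq_mul, norm_smul, norm_eq_of_mem_sphere y,
      Real.norm_of_nonneg hr.le, mul_one]
    rw [mul_pow, mul_pow, ← mul_add, mul_pow, pow_mul]
    ring

theorem integral_mul_exp_neg_norm_sq_eq_sqrt_pi_pow_mul (m k : ℕ) :
    ∫ x : Esp (m + 1), (x 0 ^ 2 + x 1 ^ 2) ^ k * exp (-‖x‖ ^ 2) =
      √π ^ m * ∫ x : Esp 1, (x 0 ^ 2 + x 1 ^ 2) ^ k * exp (-‖x‖ ^ 2) := by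
  simp only [integral_euclideanSpace_eq_pi, EuclideanSpace.real_norm_sq_eq]
  exact integral_two_coords_mul_exp_neg_sum_sq m fun a b => (a ^ 2 + b ^ 2) ^ k

theorem sphMoment_one (k : ℕ) : sphMoment 1 k = (sphMeasure 1).real univ := by
  have h (y : Sph 1) : ((y : Esp 1) 0 ^ 2 + (y : Esp 1) 1 ^ 2) ^ k = 1 := by
    rw [← Fin.sum_univ_two (fun i => (y : Esp 1) i ^ 2), sum_sq_eq_one, one_pow]
  simp [sphMoment, h]

theorem sphMoment_mul_Gamma (m k : ℕ) :
    sphMoment (m + 1) k * Gamma (k + 1 + m / 2) =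
      (sphMeasure 1).real univ * √π ^ m * Gamma (k + 1) := by
  have h := integral_mul_exp_neg_norm_sq_eq_sqrt_pi_pow_mul m k
  rw [integral_mul_exp_neg_norm_sq_eq_sphMoment, integral_mul_exp_neg_norm_sq_eq_sphMoment,
    sphMoment_one] at h
  have hΓ₁ : (k : ℝ) + ((m + 1 : ℕ) + 1) / 2 = k + 1 + m / 2 := by push_cast; ring
  have hΓ₂ : (k : ℝ) + ((1 : ℕ) + 1) / 2 = k + 1 := by norm_num
  rw [hΓ₁, hΓ₂] at h
  linear_combination 2 * h

theorem tendsto_sphMoment_mul_rpow {m : ℕ} (hm : 0 < m) :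
    Tendsto (fun k : ℕ => sphMoment (m + 1) k * (k : ℝ) ^ ((m : ℝ) / 2)) atTop
      (𝓝 ((sphMeasure 1).real univ * √π ^ m)) := by
  have hs : 0 < (m : ℝ) / 2 := by positivity
  have hΓ := Gamma_pos_of_pos hs
  convert ((GammaSeq_tendsto_Gamma ((m : ℝ) / 2)).const_mul
    ((sphMeasure 1).real univ * √π ^ m)).div_const (Gamma ((m : ℝ) / 2)) using 1
  · ext k
    have hG := (Gamma_pos_of_pos (by positivity : (0 : ℝ) < k + 1 + m / 2)).ne'
    rw [GammaSeq_eq_Gamma_div hs, eq_div_of_mul_eq hG (sphMoment_mul_Gamma m k)]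
    field_simp
  · field_simp

theorem sphMeasure_real_univ_pos (n : ℕ) : 0 < (sphMeasure n).real univ := by
  rw [sphMeasure, Measure.toSphere_real_apply_univ]
  have : 0 < volume.real (Metric.ball (0 : Esp n) 1) :=
    ENNReal.toReal_pos (Metric.measure_ball_pos _ _ one_pos).ne' measure_ball_lt_top.ne
  rw [finrank_euclideanSpace_fin]
  positivity

theorem sphMoment_pos (m k : ℕ) : 0 < sphMoment (m + 1) k := by
  have hG := Gamma_pos_of_pos (by positivity : (0 : ℝ) < k + 1 + m / 2)
  rw [eq_div_of_mul_eq hG.ne' (sphMoment_mul_Gamma m k)]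
  have := sphMeasure_real_univ_pos 1
  have := Gamma_pos_of_pos (by positivity : (0 : ℝ) < k + 1)
  positivity

theorem norm_Qfun_sq (n k : ℕ) (x : Sph n) :
    ‖Qfun n k x‖ ^ 2 = ((x : Esp n) 0 ^ 2 + (x : Esp n) 1 ^ 2) ^ k := by
  rw [Qfun, norm_pow, ← pow_mul, pow_mul', Complex.sq_norm, mul_comm Complex.I,
    Complex.normSq_add_mul_I]

theorem Qnorm_eq_sqrt_sphMoment (n k : ℕ) : Qnorm n k = √(sphMoment n k) := by
  simp only [Qnorm, sphMoment, norm_Qfun_sq]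

theorem exists_Qnorm_mul_rpow_bounds {m : ℕ} (hm : 0 < m) :
    ∃ c C : ℝ, 0 < c ∧ 0 < C ∧ ∀ k : ℕ, 1 ≤ k →
      c ≤ Qnorm (m + 1) k * (k : ℝ) ^ ((m : ℝ) / 4) ∧
        Qnorm (m + 1) k * (k : ℝ) ^ ((m : ℝ) / 4) ≤ C := by
  obtain ⟨c, C, hc, hC, hbounds⟩ := exists_pos_bounds_of_tendsto
    ((tendsto_add_atTop_iff_nat 1).2 (tendsto_sphMoment_mul_rpow hm))
    (mul_pos (sphMeasure_real_univ_pos 1) (by positivity))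
    fun k => mul_pos (sphMoment_pos m (k + 1)) (by positivity)
  refine ⟨√c, √C, by positivity, by positivity, fun k hk => ?_⟩
  obtain ⟨j, rfl⟩ := Nat.exists_eq_add_of_le' hk
  have hsqrt : Qnorm (m + 1) (j + 1) * ((j + 1 : ℕ) : ℝ) ^ ((m : ℝ) / 4) =
      √(sphMoment (m + 1) (j + 1) * ((j + 1 : ℕ) : ℝ) ^ ((m : ℝ) / 2)) := by
    rw [Qnorm_eq_sqrt_sphMoment, sqrt_mul' _ (by positivity), sqrt_eq_rpow (_ ^ _),
      ← rpow_mul (by positivity)]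
    ring_nf
  rw [hsqrt]
  exact ⟨sqrt_le_sqrt (hbounds j).1, sqrt_le_sqrt (hbounds j).2⟩

theorem tfun_nonneg {n : ℕ} (x : Sph n) : 0 ≤ tfun n x :=
  Finset.sum_nonneg fun _ _ => sq_nonneg _

theorem sq_add_sq_eq_one_sub_tfun {n : ℕ} (hn : 1 ≤ n) (x : Sph n) :
    (x : Esp n) 0 ^ 2 + (x : Esp n) 1 ^ 2 = 1 - tfun n x := by
  obtain ⟨m, rfl⟩ := Nat.exists_eq_add_of_le' hn
  have h1 : (1 : Fin (m + 2)) ∈ Finset.univ.erase 0 := by simp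
  rw [← sum_sq_eq_one x, ← Finset.add_sum_erase _ _ (Finset.mem_univ 0),
    ← Finset.add_sum_erase _ _ h1, tfun]
  have hs : (Finset.univ.erase 0).erase 1 =
      Finset.univ.filter fun i : Fin (m + 2) => i ≠ 0 ∧ i ≠ 1 := by
    ext i; simp [and_comm]
  rw [hs]
  ring

theorem norm_Qfun_le {n : ℕ} (hn : 1 ≤ n) (k : ℕ) (x : Sph n) :
    ‖Qfun n k x‖ ≤ exp (-(k * tfun n x) / 2) := by
  have h := sq_add_sq_eq_one_sub_tfun hn x
  refine (pow_le_pow_iff_left₀ (norm_nonneg _) (exp_pos _).le two_ne_zero).1 ?_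
  calc ‖Qfun n k x‖ ^ 2 = (1 - tfun n x) ^ k := by rw [norm_Qfun_sq, h]
    _ ≤ exp (-tfun n x) ^ k :=
        pow_le_pow_left₀ (by rw [← h]; positivity) (one_sub_le_exp_neg _) k
    _ = exp (-(k * tfun n x) / 2) ^ 2 := by rw [← exp_nat_mul, ← exp_nat_mul]; ring_nf

theorem exp_le_norm_Qfun {n : ℕ} (hn : 1 ≤ n) (k : ℕ) {x : Sph n} (hx : tfun n x ≤ 1 / 2) :
    exp (-(k * tfun n x)) ≤ ‖Qfun n k x‖ := by
  refine (pow_le_pow_iff_left₀ (exp_pos _).le (norm_nonneg _) two_ne_zero).1 ?_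
  calc exp (-(k * tfun n x)) ^ 2 = exp (-(2 * tfun n x)) ^ k := by
        rw [← exp_nat_mul, ← exp_nat_mul]; ring_nf
    _ ≤ (1 - tfun n x) ^ k :=
        pow_le_pow_left₀ (exp_pos _).le (exp_neg_two_mul_le_one_sub (tfun_nonneg x) hx) k
    _ = ‖Qfun n k x‖ ^ 2 := by rw [norm_Qfun_sq, sq_add_sq_eq_one_sub_tfun hn]

theorem norm_Qtilde (n k : ℕ) (x : Sph n) : ‖Qtilde n k x‖ = ‖Qfun n k x‖ / Qnorm n k := by
  have hN : 0 ≤ Qnorm n k := sqrt_nonneg _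
  rw [Qtilde, norm_div, Complex.norm_real, Real.norm_of_nonneg hN]

/-- The Gaussian beam bounds for the normalized highest weight spherical harmonics
(Section 4 of the paper): `|Q̃_k(x)| ≈ k^{(n-1)/4} e^{-k t(x)/2}`. -/
theorem highest_weight_gaussian_beam_bounds (n : ℕ) (hn : 2 ≤ n) :
    ∃ c C : ℝ, 0 < c ∧ 0 < C ∧ ∀ k : ℕ, 1 ≤ k →
      (∀ x : Sph n,
        ‖Qtilde n k x‖ ≤
          C * (k : ℝ) ^ (((n : ℝ) - 1) / 4) * Real.exp (-((k : ℝ) * tfun n x) / 2)) ∧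
      (∀ x : Sph n, tfun n x ≤ 1 / 2 →
        c * (k : ℝ) ^ (((n : ℝ) - 1) / 4) * Real.exp (-((k : ℝ) * tfun n x)) ≤
          ‖Qtilde n k x‖) := by
  obtain ⟨m, rfl⟩ := Nat.exists_eq_add_of_le' (by omega : 1 ≤ n)
  obtain ⟨c, C, hc, hC, hQnorm⟩ := exists_Qnorm_mul_rpow_bounds (by omega : 0 < m)
  refine ⟨C⁻¹, c⁻¹, inv_pos.2 hC, inv_pos.2 hc, fun k hk => ?_⟩
  obtain ⟨hlow, hup⟩ := hQnorm k hk
  have hexp : (((m + 1 : ℕ) : ℝ) - 1) / 4 = m / 4 := by push_cast; ring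
  have hN : 0 < Qnorm (m + 1) k := pos_of_mul_pos_left (hc.trans_le hlow) (by positivity)
  simp only [hexp, norm_Qtilde]
  refine ⟨fun x => ?_, fun x hx => ?_⟩
  · rw [div_le_iff₀ hN]
    calc ‖Qfun (m + 1) k x‖ ≤ exp (-(k * tfun (m + 1) x) / 2) := norm_Qfun_le (by omega) k x
      _ ≤ c⁻¹ * (Qnorm (m + 1) k * (k : ℝ) ^ ((m : ℝ) / 4)) * exp (-(k * tfun (m + 1) x) / 2) :=
          le_mul_of_one_le_left (exp_pos _).le ((one_le_inv_mul₀ hc).2 hlow)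
      _ = _ := by ring
  · rw [le_div_iff₀ hN]
    calc C⁻¹ * (k : ℝ) ^ ((m : ℝ) / 4) * exp (-(k * tfun (m + 1) x)) * Qnorm (m + 1) k
        = C⁻¹ * (Qnorm (m + 1) k * (k : ℝ) ^ ((m : ℝ) / 4)) * exp (-(k * tfun (m + 1) x)) := by
          ring
      _ ≤ exp (-(k * tfun (m + 1) x)) :=
          mul_le_of_le_one_left (exp_pos _).le ((inv_mul_le_one₀ hC).2 hup)
      _ ≤ ‖Qfun (m + 1) k x‖ := exp_le_norm_Qfun (by omega) k hx
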